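/- arXiv:0804.2203 — 7 statements merged into one kernel-verified Lean document; each statement's English description precedes it below -/
import Mathlib

section
/- For every real number λ > 1 and every finite list of real numbers r₁, …, r_m, there exist a positive real number ξ and a positive constant c (depending only on λ and r₁,…,r_m) such that the distance from ξλʲ − rᵢ to the nearest integer is at least c for every i ∈ {1,…,m} and every integer j ≥ 0. -/
/-!
Nested intervals, refined in blocks of `T` consecutive exponents, where `λ ^ T` is large
compared with `m * T`. Put `K = ⌊λ ^ T⌋₊`, `L = (λ - 1) / (8 * m + 1)` and `c = L / (2 * K)`.
For the block `k * T ≤ j < (k + 1) * T`, cut the current interval, of length `L / λ ^ (k * T)`,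
into `K` equal pieces. The points `x` with `λ ^ j * x - r i ∈ ℤ` lying near it number fewer than
`K / 2`, by the geometric sum `∑ t < T, λ ^ t < λ ^ T / (λ - 1)`, and each of them spoils at most
two pieces, so one piece stays at distance `c` from all of them. That piece has length at least
`L / λ ^ ((k + 1) * T)`, and `ξ` is a point common to all the intervals.
-/

open Finset Filter

theorem card_Icc_ceil_floor_le {u v : ℝ} (h : u ≤ v + 1) :
    (#(Finset.Icc ⌈u⌉ ⌊v⌋) : ℝ) ≤ v - u + 1 := by
  rcases le_or_gt ⌈u⌉ (⌊v⌋ + 1) with hle | hlt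
  · have hcard : (#(Finset.Icc ⌈u⌉ ⌊v⌋) : ℝ) = ((⌊v⌋ + 1 - ⌈u⌉ : ℤ) : ℝ) := by
      exact_mod_cast Int.card_Icc_of_le _ _ hle
    rw [hcard]
    push_cast
    linarith [Int.floor_le v, Int.le_ceil u]
  · rw [Int.card_Icc, Int.toNat_of_nonpos (by omega)]
    push_cast
    linarith

theorem exists_mem_Icc_forall_of_nested {ℓ : ℕ → ℝ} (hℓ : ∀ k, 0 ≤ ℓ k) {P : ℕ → ℝ → Prop}
    (a₀ : ℝ) (step : ∀ k a, ∃ a', a ≤ a' ∧ a' + ℓ (k + 1) ≤ a + ℓ k ∧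
      ∀ x ∈ Set.Icc a' (a' + ℓ (k + 1)), P k x) :
    ∃ ξ ∈ Set.Icc a₀ (a₀ + ℓ 0), ∀ k, P k ξ := by
  choose f hf_le hf_add hf_P using step
  let A : ℕ → ℝ := fun k => Nat.rec (motive := fun _ => ℝ) a₀ f k
  let I : ℕ → Set ℝ := fun k => Set.Icc (A k) (A k + ℓ k)
  have hI : ∀ k, I (k + 1) ⊆ I k := fun k => Set.Icc_subset_Icc (hf_le k (A k)) (hf_add k (A k))
  obtain ⟨ξ, hξ⟩ := IsCompact.nonempty_iInter_of_sequence_nonempty_isCompact_isClosed I hI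
    (fun k => Set.nonempty_Icc.2 (by linarith [hℓ k])) isCompact_Icc (fun _ => isClosed_Icc)
  rw [Set.mem_iInter] at hξ
  exact ⟨ξ, hξ 0, fun k => hf_P k (A k) ξ (hξ (k + 1))⟩

theorem exists_lt_forall_le_abs_sub (a : ℝ) {h ρ : ℝ} (hh : 0 < h) (hρ : 2 * ρ ≤ h) {K : ℕ}
    (S : Finset ℝ) (hS : 2 * #S < K) :
    ∃ q : ℕ, q < K ∧ ∀ x ∈ Set.Icc (a + q * h) (a + q * h + h), ∀ z ∈ S, ρ ≤ |x - z| := by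
  let B : Finset ℤ := S.biUnion fun z => {⌊(z - a) / h - 1 / 2⌋, ⌊(z - a) / h - 1 / 2⌋ + 1}
  have hB : #B < #((range K).map (Nat.castEmbedding (R := ℤ))) := by
    rw [card_map, card_range]
    calc #B ≤ ∑ _z ∈ S, 2 := card_biUnion_le.trans (sum_le_sum fun _ _ => card_le_two)
      _ = 2 * #S := by rw [sum_const, smul_eq_mul, mul_comm]
      _ < K := hS
  obtain ⟨_, hq, hqB⟩ := exists_mem_notMem_of_card_lt_card hB
  obtain ⟨q, hqK, rfl⟩ := mem_map.1 hq
  rw [Nat.castEmbedding_apply] at hqB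
  refine ⟨q, mem_range.1 hqK, fun x hx z hz => ?_⟩
  by_contra! hxz
  apply hqB
  refine mem_biUnion.2 ⟨z, hz, ?_⟩
  -- `z` is within `h / 2` of the `q`-th piece, so `(z - a) / h ∈ (q - 1/2, q + 3/2)`
  set w := (z - a) / h
  have hzw : z - a = w * h := by simp only [w]; field_simp
  obtain ⟨hx₁, hx₂⟩ := hx
  obtain ⟨hxz₁, hxz₂⟩ := abs_lt.1 hxz
  have hw₁ : (q - 1 / 2) * h < w * h := by linarith
  have hw₂ : w * h < (q + 3 / 2) * h := by linarith
  have hf₁ : ((⌊w - 1 / 2⌋ : ℤ) : ℝ) < q + 1 := by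
    linarith [Int.floor_le (w - 1 / 2), lt_of_mul_lt_mul_right hw₂ hh.le]
  have hf₂ : (q : ℝ) < ⌊w - 1 / 2⌋ + 2 := by
    linarith [Int.lt_floor_add_one (w - 1 / 2), lt_of_mul_lt_mul_right hw₁ hh.le]
  have hf₁' : ⌊w - 1 / 2⌋ < q + 1 := by exact_mod_cast hf₁
  have hf₂' : (q : ℤ) < ⌊w - 1 / 2⌋ + 2 := by exact_mod_cast hf₂
  simp only [Finset.mem_insert, Finset.mem_singleton]
  omega

theorem exists_pos_mul_add_one_le_pow {lam : ℝ} (hlam : 1 < lam) (b : ℝ) :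
    ∃ T : ℕ, 0 < T ∧ b * T + 1 ≤ lam ^ T := by
  have hsmall := (tendsto_pow_const_div_const_pow_of_one_lt 1 hlam).eventually
    (gt_mem_nhds (show (0 : ℝ) < 1 / (|b| + 1) by positivity))
  obtain ⟨T, hT, hT1⟩ := (hsmall.and (eventually_ge_atTop 1)).exists
  refine ⟨T, hT1, ?_⟩
  rw [pow_one, div_lt_div_iff₀ (pow_pos (by linarith) T) (by positivity)] at hT
  have hT1' : (1 : ℝ) ≤ T := by exact_mod_cast hT1
  nlinarith [le_abs_self b, abs_nonneg b]

theorem exists_subinterval_far_from_int {ι : Type*} [Fintype ι] (s r : ι → ℝ) {σ : ℝ}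
    (hσ : 0 < σ) (hs : ∀ p, σ ≤ s p) (a : ℝ) {G c : ℝ} (hG : 0 < G) (hc : 0 ≤ c) {K : ℕ}
    (hcK : 2 * c * K ≤ σ * G) (hK : ∑ p, (4 * (s p * G) + 2) < K) :
    ∃ a', a ≤ a' ∧ a' + G / K ≤ a + G ∧
      ∀ x ∈ Set.Icc a' (a' + G / K), ∀ p (n : ℤ), c ≤ |s p * x - r p - n| := by
  have hs₀ : ∀ p, 0 < s p := fun p => hσ.trans_le (hs p)
  have hK₀ : (0 : ℝ) < K :=
    (sum_nonneg fun p _ => by linarith [hs₀ p, mul_pos (hs₀ p) hG]).trans_lt hK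
  have hc₂ : ∀ p, 2 * c ≤ s p * G := fun p => by
    nlinarith [mul_le_mul_of_nonneg_right (hs p) hG.le, (Nat.one_le_cast (α := ℝ)).2
      (Nat.cast_pos.1 hK₀)]
  let lo p := ⌈s p * a - r p - c⌉
  let hi p := ⌊s p * (a + G) - r p + c⌋
  -- the solutions of `s p * x - r p ∈ ℤ` that can come within `c / σ` of `[a, a + G]`
  let S : Finset ℝ :=
    univ.biUnion fun p => (Finset.Icc (lo p) (hi p)).image fun n : ℤ => (r p + n) / s p
  have hS : 2 * #S < K := by
    have hcard : ∀ p, (#(Finset.Icc (lo p) (hi p)) : ℝ) ≤ 2 * (s p * G) + 1 := fun p => by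
      refine (card_Icc_ceil_floor_le (by nlinarith [hs₀ p])).trans ?_
      linarith [hc₂ p]
    have hSle : (#S : ℝ) ≤ ∑ p, (2 * (s p * G) + 1) := by
      calc (#S : ℝ) ≤ ((∑ p, #(Finset.Icc (lo p) (hi p)) : ℕ) : ℝ) := by
            exact_mod_cast card_biUnion_le.trans (sum_le_sum fun p _ => card_image_le)
        _ ≤ _ := by push_cast; exact sum_le_sum fun p _ => hcard p
    have : (2 * #S : ℝ) < K := by
      calc (2 * #S : ℝ) ≤ 2 * ∑ p, (2 * (s p * G) + 1) := by linarith
        _ = ∑ p, (4 * (s p * G) + 2) := by rw [mul_sum]; exact sum_congr rfl fun p _ => by ring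
        _ < K := hK
    exact_mod_cast this
  have hρ : 2 * (c / σ) ≤ G / K := by
    rw [← mul_div_assoc, div_le_div_iff₀ hσ hK₀]
    linarith
  obtain ⟨q, hqK, hq⟩ := exists_lt_forall_le_abs_sub a (div_pos hG hK₀) hρ S hS
  have hqK' : (q : ℝ) + 1 ≤ K := by exact_mod_cast hqK
  have ha : a ≤ a + q * (G / K) := le_add_of_nonneg_right (by positivity)
  have hb : a + q * (G / K) + G / K ≤ a + G :=
    calc a + q * (G / K) + G / K = a + (q + 1) * (G / K) := by ring
      _ ≤ a + K * (G / K) := by gcongr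
      _ = a + G := by field_simp
  refine ⟨a + q * (G / K), ha, hb, fun x hx p n => ?_⟩
  have hxa : s p * a ≤ s p * x := mul_le_mul_of_nonneg_left (ha.trans hx.1) (hs₀ p).le
  have hxb : s p * x ≤ s p * (a + G) := mul_le_mul_of_nonneg_left (hx.2.trans hb) (hs₀ p).le
  by_cases hn : n ∈ Finset.Icc (lo p) (hi p)
  · have hz : (r p + n) / s p ∈ S := mem_biUnion.2 ⟨p, mem_univ _, mem_image_of_mem _ hn⟩
    calc c ≤ s p * (c / σ) := by
          rw [mul_div_assoc', le_div_iff₀ hσ]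
          exact mul_le_mul_of_nonneg_left (hs p) hc |>.trans_eq (mul_comm _ _)
      _ ≤ s p * |x - (r p + n) / s p| := mul_le_mul_of_nonneg_left (hq x hx _ hz) (hs₀ p).le
      _ = |s p * x - r p - n| := by
          rw [← abs_of_pos (hs₀ p), ← abs_mul, abs_of_pos (hs₀ p), mul_sub,
            mul_div_cancel₀ _ (hs₀ p).ne', sub_sub]
  · rw [Finset.mem_Icc, not_and_or, not_le, not_le, Int.lt_ceil, Int.floor_lt] at hn
    rcases hn with hn | hn
    · exact le_abs.2 (Or.inl (by linarith))
    · exact le_abs.2 (Or.inr (by linarith))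

theorem exists_block_step {lam : ℝ} (hlam : 1 < lam) {m : ℕ} (r : Fin m → ℝ) {T K : ℕ} {L : ℝ}
    (hL : 0 < L) (hK : (K : ℝ) ≤ lam ^ T)
    (hsum : ∑ _i : Fin m, ∑ t : Fin T, (4 * (lam ^ (t : ℕ) * L) + 2) < K) (k : ℕ) (a : ℝ) :
    ∃ a', a ≤ a' ∧ a' + L / lam ^ ((k + 1) * T) ≤ a + L / lam ^ (k * T) ∧
      ∀ x ∈ Set.Icc a' (a' + L / lam ^ ((k + 1) * T)), ∀ (i : Fin m) (t : Fin T) (n : ℤ),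
        L / (2 * K) ≤ |lam ^ (k * T + t) * x - r i - n| := by
  have hlam₀ : 0 < lam := by linarith
  have hK₀ : (0 : ℝ) < K :=
    (sum_nonneg fun _ _ => sum_nonneg fun _ _ => by positivity).trans_lt hsum
  have hscale : ∀ t : ℕ, lam ^ (k * T + t) * (L / lam ^ (k * T)) = lam ^ t * L := fun t => by
    rw [pow_add]; field_simp
  obtain ⟨a', ha, ha', hgood⟩ := exists_subinterval_far_from_int
    (fun p : Fin m × Fin T => lam ^ (k * T + p.2)) (fun p => r p.1) (pow_pos hlam₀ (k * T))
    (fun p => pow_le_pow_right₀ hlam.le (Nat.le_add_right _ _)) a (div_pos hL (pow_pos hlam₀ _))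
    (c := L / (2 * K)) (by positivity) (le_of_eq (by field_simp))
    (by simpa only [Fintype.sum_prod_type, hscale] using hsum)
  have hlen : L / lam ^ ((k + 1) * T) ≤ L / lam ^ (k * T) / K := by
    rw [add_mul, one_mul, pow_add, ← div_div]
    exact div_le_div_of_nonneg_left (by positivity) hK₀ hK
  exact ⟨a', ha, by linarith, fun x hx i t n =>
    hgood x ⟨hx.1, hx.2.trans (by linarith)⟩ (i, t) n⟩

theorem sum_block_lt_floor {lam : ℝ} (hlam : 1 < lam) {m T : ℕ} (hT : 4 * m * T + 1 ≤ lam ^ T) :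
    ∑ _i : Fin m, ∑ t : Fin T, (4 * (lam ^ (t : ℕ) * ((lam - 1) / (8 * m + 1))) + 2)
      < ⌊lam ^ T⌋₊ := by
  have hgeom : ∑ t : Fin T, lam ^ (t : ℕ) = (lam ^ T - 1) / (lam - 1) := by
    rw [Fin.sum_univ_eq_sum_range (fun t => lam ^ t), geom_sum_eq hlam.ne']
  have hsum : ∑ _i : Fin m, ∑ t : Fin T, (4 * (lam ^ (t : ℕ) * ((lam - 1) / (8 * m + 1))) + 2)
      = 4 * m / (8 * m + 1) * (lam ^ T - 1) + 2 * m * T := by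
    simp only [sum_const, card_univ, Fintype.card_fin, nsmul_eq_mul, sum_add_distrib, ← mul_sum,
      ← sum_mul, hgeom]
    field_simp [sub_ne_zero.2 hlam.ne']
  have hratio : 4 * (m : ℝ) / (8 * m + 1) ≤ 1 / 2 := by
    rw [div_le_div_iff₀ (by positivity) (by norm_num)]
    linarith
  rw [hsum]
  calc 4 * m / (8 * m + 1) * (lam ^ T - 1) + 2 * m * T ≤ 1 / 2 * (lam ^ T - 1) + 2 * m * T := by
        gcongr
        linarith [one_le_pow₀ (n := T) hlam.le]
    _ ≤ lam ^ T - 1 := by linarith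
    _ < ⌊lam ^ T⌋₊ := Nat.sub_one_lt_floor _

/-- Powers of λ modulo 1 avoid a finite set of targets: there exist ξ > 0 and c > 0
with ‖ξλʲ − rᵢ‖_ℤ ≥ c for all i, j. -/
theorem stmt0 (lam : ℝ) (hlam : 1 < lam) (m : ℕ) (r : Fin m → ℝ) :
    ∃ ξ : ℝ, 0 < ξ ∧ ∃ c : ℝ, 0 < c ∧
      ∀ (i : Fin m) (j : ℕ) (n : ℤ), c ≤ |ξ * lam ^ j - r i - n| := by
  obtain ⟨T, hT₀, hT⟩ := exists_pos_mul_add_one_le_pow hlam (4 * m)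
  set L := (lam - 1) / (8 * m + 1)
  have hL : 0 < L := div_pos (by linarith) (by positivity)
  set K := ⌊lam ^ T⌋₊
  have hK : 0 < K := Nat.floor_pos.2 (one_le_pow₀ hlam.le)
  obtain ⟨ξ, hξ, hgood⟩ := exists_mem_Icc_forall_of_nested (ℓ := fun k => L / lam ^ (k * T))
    (fun k => div_nonneg hL.le (pow_nonneg (by linarith) _)) 1
    (exists_block_step hlam r hL (Nat.floor_le (by positivity)) (sum_block_lt_floor hlam hT))
  refine ⟨ξ, by linarith [hξ.1], L / (2 * K), by positivity, fun i j n => ?_⟩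
  have := hgood (j / T) i ⟨j % T, Nat.mod_lt j hT₀⟩ n
  rw [Nat.div_add_mod'] at this
  rwa [mul_comm ξ]
end

section
/- For every real number λ > 1 and every finite list of real numbers r₁, …, r_m, setting c := (λ−1)²/(20(m+2)²λ³), there exists a positive real number ξ such that the distance from ξλʲ − rᵢ to the nearest integer is at least c for every i ∈ {1,…,m} and every integer j ≥ 0. -/
/-!
Fix a block length `k` with `λ^k ≥ 20 (m k + 1)` but `k ≤ 1 / (8 c (m + 2))`. A union bound over
the finitely many windows `{y : |y λ^j - r_i - n| < c}`, `j < k`, shows that every interval of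
length `w = (λ - 1) / (3 (m + 2))` contains a subinterval of length `w / λ^k` on which all of
`‖y λ^j - r_i‖`, `j < k`, are at least `c`. Rescaling by `λ^(p k)` makes this a statement about
the exponents `p k ≤ j < (p + 1) k`, and the nested intervals obtained block after block meet in a
point `ξ`, by Cantor's intersection theorem.
-/

open MeasureTheory Set Real
open scoped Nat

theorem exists_mem_Icc_forall_mem_of_exists_Icc_subset (ℓ : ℕ → ℝ) (hℓ : ∀ p, 0 ≤ ℓ p)
    (S : ℕ → Set ℝ) (h : ∀ p a, ∃ a', Icc a' (a' + ℓ (p + 1)) ⊆ Icc a (a + ℓ p) ∩ S p)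
    (a₀ : ℝ) : ∃ ξ ∈ Icc a₀ (a₀ + ℓ 0), ∀ p, ξ ∈ S p := by
  choose next hnext using h
  let a : ℕ → ℝ := fun p => Nat.rec a₀ next p
  have hstep : ∀ p, Icc (a (p + 1)) (a (p + 1) + ℓ (p + 1)) ⊆ Icc (a p) (a p + ℓ p) ∩ S p :=
    fun p => hnext p (a p)
  obtain ⟨ξ, hξ⟩ := IsCompact.nonempty_iInter_of_sequence_nonempty_isCompact_isClosed
    (fun p => Icc (a p) (a p + ℓ p)) (fun p => (hstep p).trans inter_subset_left)
    (fun p => nonempty_Icc.2 (le_add_of_nonneg_right (hℓ p))) isCompact_Icc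
    (fun _ => isClosed_Icc)
  rw [mem_iInter] at hξ
  exact ⟨ξ, hξ 0, fun p => (hstep p (hξ (p + 1))).2⟩

theorem exists_Icc_subset_preimage_mul_const {G : Set ℝ} {ℓ ℓ' : ℝ}
    (h : ∀ a, ∃ a', Icc a' (a' + ℓ') ⊆ Icc a (a + ℓ) ∩ G) {μ : ℝ} (hμ : 0 < μ) (a : ℝ) :
    ∃ a', Icc a' (a' + ℓ' / μ) ⊆ Icc a (a + ℓ / μ) ∩ (fun x => x * μ) ⁻¹' G := by
  obtain ⟨b, hb⟩ := h (a * μ)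
  refine ⟨b / μ, ?_⟩
  have hpre := preimage_mono (f := fun x => x * μ) hb
  rwa [preimage_inter, preimage_mul_const_Icc₀ _ _ hμ, preimage_mul_const_Icc₀ _ _ hμ, add_div,
    add_div, mul_div_cancel_right₀ a hμ.ne'] at hpre

theorem exists_forall_notMem_Ioo_of_sum_lt {κ : Type*} (s : Finset κ) (u v : κ → ℝ)
    (huv : ∀ i ∈ s, u i ≤ v i) {A B δ : ℝ} (hδ : 0 ≤ δ)
    (h : ∑ i ∈ s, (v i - u i + δ) < B - A - δ) :
    ∃ x ∈ Icc A (B - δ), ∀ i ∈ s, ∀ y ∈ Icc x (x + δ), y ∉ Ioo (u i) (v i) := by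
  set X := ⋃ i ∈ s, Ioo (u i - δ) (v i)
  have hX : volume X < volume (Icc A (B - δ)) := by
    calc volume X ≤ ∑ i ∈ s, volume (Ioo (u i - δ) (v i)) := measure_biUnion_finset_le _ _
      _ = ENNReal.ofReal (∑ i ∈ s, (v i - u i + δ)) := by
        rw [ENNReal.ofReal_sum_of_nonneg fun i hi => by linarith [huv i hi]]
        exact Finset.sum_congr rfl fun i _ => by rw [Real.volume_Ioo]; ring_nf
      _ < volume (Icc A (B - δ)) := by
        rw [Real.volume_Icc, ENNReal.ofReal_lt_ofReal_iff_of_nonneg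
          (Finset.sum_nonneg fun i hi => by linarith [huv i hi])]
        linarith
  obtain ⟨x, hxI, hxX⟩ := not_subset.1 fun hsub => (measure_mono hsub).not_gt hX
  refine ⟨x, hxI, fun i hi y hy hyuv => hxX (mem_biUnion hi ?_)⟩
  exact ⟨by linarith [hy.2, hyuv.1], hyuv.2.trans_le' hy.1⟩

theorem Int.card_Ioo_floor_ceil_le {a b : ℝ} (hab : a ≤ b) :
    ((Finset.Ioo ⌊a⌋ ⌈b⌉).card : ℝ) ≤ b - a + 1 := by
  rw [Int.card_Ioo]
  rcases le_or_gt (⌈b⌉ - ⌊a⌋ - 1) 0 with hle | hlt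
  · rw [Int.toNat_of_nonpos hle]; push_cast; linarith
  · have := Int.ceil_lt_add_one b
    have := Int.sub_one_lt_floor a
    rw [← Int.cast_natCast, Int.toNat_of_nonneg hlt.le]; push_cast; linarith

-- The `x` to avoid are the `(ρ i + n ± c) / θ i` windows widened by `δ`, for the at most
-- `w θ i + 2c + 1` integers `n` whose window meets `[A, A + w]`.
theorem exists_Icc_subset_forall_le_abs_sub {ι : Type*} [Fintype ι] (θ ρ : ι → ℝ)
    (hθ : ∀ i, 0 < θ i) {c w δ : ℝ} (hc : 0 ≤ c) (hw : 0 ≤ w) (hδ : 0 ≤ δ)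
    (h : ∑ i, (w * θ i + 2 * c + 1) * (2 * c / θ i + δ) < w - δ) (A : ℝ) :
    ∃ x, Icc x (x + δ) ⊆ Icc A (A + w) ∩ {y | ∀ i, ∀ n : ℤ, c ≤ |y * θ i - ρ i - n|} := by
  let N i := Finset.Ioo ⌊A * θ i - ρ i - c⌋ ⌈(A + w) * θ i - ρ i + c⌉
  let u : (Σ _ : ι, ℤ) → ℝ := fun p => (ρ p.1 + p.2 - c) / θ p.1
  let v : (Σ _ : ι, ℤ) → ℝ := fun p => (ρ p.1 + p.2 + c) / θ p.1
  have hsum : ∑ p ∈ Finset.univ.sigma N, (v p - u p + δ) < A + w - A - δ := by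
    calc ∑ p ∈ Finset.univ.sigma N, (v p - u p + δ)
        = ∑ i, ((N i).card : ℝ) * (2 * c / θ i + δ) := by
          rw [Finset.sum_sigma]
          refine Finset.sum_congr rfl fun i _ => ?_
          rw [← nsmul_eq_mul, ← Finset.sum_const]
          refine Finset.sum_congr rfl fun n _ => ?_
          simp only [u, v]
          ring
      _ ≤ ∑ i, (w * θ i + 2 * c + 1) * (2 * c / θ i + δ) := by
          refine Finset.sum_le_sum fun i _ => ?_
          have hθi := hθ i
          gcongr
          calc ((N i).card : ℝ) ≤ (A + w) * θ i - ρ i + c - (A * θ i - ρ i - c) + 1 :=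
                Int.card_Ioo_floor_ceil_le (by nlinarith)
            _ = w * θ i + 2 * c + 1 := by ring
      _ < A + w - A - δ := by linarith
  obtain ⟨x, hx, hxgood⟩ := exists_forall_notMem_Ioo_of_sum_lt _ u v
    (fun p _ => div_le_div_of_nonneg_right (by linarith) (hθ p.1).le) hδ hsum
  refine ⟨x, fun y hy => ⟨⟨hx.1.trans hy.1, by linarith [hx.2, hy.2]⟩, fun i n => ?_⟩⟩
  by_contra! hlt
  have hθi := hθ i
  have hAy : A * θ i ≤ y * θ i := by nlinarith [hx.1, hy.1]
  have hyw : y * θ i ≤ (A + w) * θ i := by nlinarith [hx.2, hy.2]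
  rw [abs_lt] at hlt
  have hn : n ∈ N i := Int.cast_mem_Ioo_iff.1 ⟨by linarith, by linarith⟩
  refine hxgood ⟨i, n⟩ (Finset.mem_sigma.2 ⟨Finset.mem_univ i, hn⟩) y hy ⟨?_, ?_⟩
  · rw [div_lt_iff₀ hθi]; linarith
  · rw [lt_div_iff₀ hθi]; linarith

theorem mul_one_sub_inv_pow_div_factorial_le_pow {x : ℝ} (hx : 1 ≤ x) (n d : ℕ) :
    (n * (1 - x⁻¹)) ^ d / d ! ≤ x ^ n := by
  have hx0 : 0 < x := by linarith
  have hlog : 1 - x⁻¹ ≤ log x := one_sub_inv_le_log_of_pos hx0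
  have hinv : 0 ≤ 1 - x⁻¹ := sub_nonneg.2 (inv_le_one_of_one_le₀ hx)
  calc (n * (1 - x⁻¹)) ^ d / d ! ≤ (n * log x) ^ d / d ! := by gcongr
    _ ≤ exp (n * log x) :=
      Real.pow_div_factorial_le_exp _ (mul_nonneg n.cast_nonneg (hinv.trans hlog)) d
    _ = x ^ n := by rw [exp_nat_mul, exp_log hx0]

theorem exists_nat_mul_le_and_le_pow {lam : ℝ} (hlam : 1 < lam) (m : ℕ) :
    ∃ k : ℕ, 0 < k ∧ 2 * (lam - 1) ^ 2 * k ≤ 5 * (m + 2) * lam ^ 3 ∧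
      20 * (m * k + 1) ≤ lam ^ k := by
  have hμ : 0 < lam - 1 := by linarith
  have h27 : 27 * (lam - 1) ^ 2 ≤ 4 * lam ^ 3 := by nlinarith [sq_nonneg (lam - 3)]
  set D := 5 * (m + 2) * lam ^ 3 / (2 * (lam - 1) ^ 2)
  have hD : 33 ≤ D := by
    rw [le_div_iff₀ (by positivity)]
    nlinarith [(by positivity : (0 : ℝ) ≤ m * lam ^ 3)]
  set k := ⌊D⌋₊
  have hkD : (k : ℝ) ≤ D := Nat.floor_le (by linarith)
  have hDk : D < k + 1 := Nat.lt_floor_add_one D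
  have hk : (33 : ℝ) ≤ k := by
    have : (32 : ℝ) < k := by linarith
    exact_mod_cast (show 32 < k by exact_mod_cast this)
  refine ⟨k, by exact_mod_cast (show (0 : ℝ) < k by linarith), ?_, ?_⟩
  · rwa [le_div_iff₀ (by positivity), mul_comm] at hkD
  · -- `D ≥ 33` gives `k > D - 1 ≥ (33 / 34) * D`.
    have hlow : 165 * (m + 2) * lam ^ 3 ≤ 68 * (lam - 1) ^ 2 * k := by
      rw [div_lt_iff₀ (by positivity)] at hDk
      nlinarith
    have h27' : 27 * (lam - 1) ≤ 4 * lam ^ 3 := by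
      nlinarith [mul_nonneg (sq_nonneg (2 * lam - 3)) (by linarith : 0 ≤ lam + 3)]
    have hm : 4 * ((m : ℝ) + 1) ≤ (m + 2) ^ 2 := by nlinarith [sq_nonneg (m : ℝ)]
    have hsq : 120 * (m + 1) * lam ^ 3 * (lam - 1) ≤ k ^ 2 * (lam - 1) ^ 3 * (lam - 1) := by
      have h1 : (165 * (m + 2) * lam ^ 3) ^ 2 ≤ (68 * (lam - 1) ^ 2 * k) ^ 2 :=
        pow_le_pow_left₀ (by positivity) hlow 2
      have h2 := mul_le_mul_of_nonneg_right (mul_le_mul hm h27' (by positivity) (by positivity))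
        (by positivity : (0 : ℝ) ≤ lam ^ 3)
      nlinarith
    have hcube : 120 * (m + 1) * lam ^ 3 ≤ k ^ 2 * (lam - 1) ^ 3 :=
      le_of_mul_le_mul_right hsq hμ
    calc 20 * ((m : ℝ) * k + 1) ≤ 20 * (m + 1) * k := by nlinarith
      _ ≤ k * (k ^ 2 * (lam - 1) ^ 3) / (6 * lam ^ 3) := by
        rw [le_div_iff₀ (by positivity)]; nlinarith
      _ = (k * (1 - lam⁻¹)) ^ 3 / 3 ! := by
        rw [Nat.factorial]; field_simp; ring
      _ ≤ lam ^ k := mul_one_sub_inv_pow_div_factorial_le_pow hlam.le k 3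

open Finset in
theorem sum_range_add_mul_add_le {lam b e w : ℝ} (hlam : 1 < lam) (hb : 0 ≤ b) (he : 0 ≤ e)
    (k : ℕ) :
    ∑ j ∈ range k, (w * lam ^ j + e) * (b / lam ^ j + w / lam ^ k) ≤
      k * (b * w + e * w / lam ^ k) + w ^ 2 / (lam - 1) + e * b * lam / (lam - 1) := by
  have hl0 : 0 < lam := by linarith
  have hterm : ∀ j ∈ range k, (w * lam ^ j + e) * (b / lam ^ j + w / lam ^ k) =
      (b * w + e * w / lam ^ k) + w ^ 2 / lam ^ k * lam ^ j + e * b * lam⁻¹ ^ j := by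
    intro j _
    rw [inv_pow]
    field_simp
    ring
  have hgeom : ∑ j ∈ range k, lam ^ j ≤ lam ^ k / (lam - 1) := by
    rw [geom_sum_eq hlam.ne' k]
    gcongr
    linarith
  have hgeom_inv : ∑ j ∈ range k, lam⁻¹ ^ j ≤ lam / (lam - 1) := by
    calc ∑ j ∈ range k, lam⁻¹ ^ j ≤ lam⁻¹ ^ 0 / (1 - lam⁻¹) := by
          rw [range_eq_Ico]
          exact geom_sum_Ico_le_of_lt_one (by positivity) (inv_lt_one_of_one_lt₀ hlam)
      _ = lam / (lam - 1) := by field_simp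
  rw [sum_congr rfl hterm, sum_add_distrib, sum_add_distrib, sum_const, card_range, nsmul_eq_mul,
    ← mul_sum, ← mul_sum]
  have hwk : w ^ 2 / lam ^ k * (lam ^ k / (lam - 1)) = w ^ 2 / (lam - 1) := by
    field_simp
  rw [← hwk, mul_div_assoc (e * b)]
  gcongr

-- With `w = (λ - 1) / (3 (m + 2))` the four error terms cost at most `w / 3`, `w / 4`,
-- `3 (2c + 1) w / 10` and `(2c + 1) w / 20`, which add up to less than `w` because `c ≤ 1 / 80`.
open Finset in
theorem covering_sum_lt {lam c w : ℝ} (hlam : 1 < lam) (m k : ℕ)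
    (hc : c = (lam - 1) ^ 2 / (20 * ((m : ℝ) + 2) ^ 2 * lam ^ 3))
    (hw : w = (lam - 1) / (3 * ((m : ℝ) + 2)))
    (hk₁ : 2 * (lam - 1) ^ 2 * k ≤ 5 * (m + 2) * lam ^ 3) (hk₂ : 20 * (m * k + 1) ≤ lam ^ k) :
    m * ∑ j ∈ range k, (w * lam ^ j + 2 * c + 1) * (2 * c / lam ^ j + w / lam ^ k) <
      w - w / lam ^ k := by
  have hl0 : 0 < lam := by linarith
  have hw0 : 0 < w := by rw [hw]; positivity
  have hc0 : 0 ≤ c := by rw [hc]; positivity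
  have hc80 : c ≤ 1 / 80 := by
    rw [hc, div_le_iff₀ (by positivity)]
    have h1 : (lam - 1) ^ 2 ≤ lam ^ 3 := by nlinarith
    have h2 : (4 : ℝ) ≤ (m + 2) ^ 2 := by nlinarith
    nlinarith [mul_le_mul_of_nonneg_right h2 (by positivity : (0 : ℝ) ≤ lam ^ 3)]
  have hsum : ∑ j ∈ range k, (w * lam ^ j + 2 * c + 1) * (2 * c / lam ^ j + w / lam ^ k) ≤
      k * (2 * c * w + (2 * c + 1) * w / lam ^ k) + w ^ 2 / (lam - 1) +
        (2 * c + 1) * (2 * c) * lam / (lam - 1) := by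
    simpa only [add_assoc] using sum_range_add_mul_add_le (w := w) hlam
      (by positivity : 0 ≤ 2 * c) (by positivity : 0 ≤ 2 * c + 1) k
  have hmM : (m : ℝ) / (m + 2) ≤ 1 := (div_le_one (by linarith)).2 (by linarith)
  have ha : m * (w ^ 2 / (lam - 1)) ≤ w / 3 := by
    calc m * (w ^ 2 / (lam - 1)) = w / 3 * (m / (m + 2)) := by rw [hw]; field_simp
      _ ≤ w / 3 := mul_le_of_le_one_right (by positivity) hmM
  have hb : m * (k * (2 * c * w)) ≤ w / 4 := by
    have h8 : 8 * c * (m + 2) * k ≤ 1 := by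
      rw [hc, show 8 * ((lam - 1) ^ 2 / (20 * ((m : ℝ) + 2) ^ 2 * lam ^ 3)) * (m + 2) * k =
        2 * (lam - 1) ^ 2 * k / (5 * (m + 2) * lam ^ 3) by field_simp; ring,
        div_le_one (by positivity)]
      exact hk₁
    nlinarith [mul_le_mul_of_nonneg_right h8 hw0.le,
      mul_nonneg (mul_nonneg hc0 hw0.le) k.cast_nonneg]
  have hd : m * ((2 * c + 1) * (2 * c) * lam / (lam - 1)) ≤ 3 * (2 * c + 1) / 10 * w := by
    have hmlam : (m : ℝ) / ((m + 2) * lam ^ 2) ≤ 1 :=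
      (div_le_one (by positivity)).2 (by nlinarith [one_le_pow₀ (n := 2) hlam.le])
    calc m * ((2 * c + 1) * (2 * c) * lam / (lam - 1))
        = (2 * c + 1) * ((lam - 1) / (10 * (m + 2))) * (m / ((m + 2) * lam ^ 2)) := by
          rw [hc]; field_simp; ring
      _ ≤ (2 * c + 1) * ((lam - 1) / (10 * (m + 2))) :=
          mul_le_of_le_one_right (by positivity) hmlam
      _ = 3 * (2 * c + 1) / 10 * w := by rw [hw]; field_simp
  have hcd : m * k * ((2 * c + 1) * w / lam ^ k) + w / lam ^ k ≤ (2 * c + 1) / 20 * w := by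
    have hmk : (0 : ℝ) ≤ m * k := by positivity
    calc m * k * ((2 * c + 1) * w / lam ^ k) + w / lam ^ k
        = w * ((2 * c + 1) * (m * k) + 1) / lam ^ k := by ring
      _ ≤ w * ((2 * c + 1) * (m * k + 1)) / lam ^ k := by gcongr; nlinarith
      _ ≤ w * ((2 * c + 1) * (m * k + 1)) / (20 * (m * k + 1)) := by gcongr
      _ = (2 * c + 1) / 20 * w := by field_simp
  have := mul_le_mul_of_nonneg_left hsum m.cast_nonneg
  have hcw : c * w ≤ w / 80 := by nlinarith
  nlinarith

/-- Effective version with explicit constant c = (λ−1)²/(20(m+2)²λ³). -/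
theorem stmt1 (lam : ℝ) (hlam : 1 < lam) (m : ℕ) (r : Fin m → ℝ) :
    ∃ ξ : ℝ, 0 < ξ ∧
      ∀ (i : Fin m) (j : ℕ) (n : ℤ),
        (lam - 1) ^ 2 / (20 * ((m : ℝ) + 2) ^ 2 * lam ^ 3) ≤ |ξ * lam ^ j - r i - n| := by
  set c := (lam - 1) ^ 2 / (20 * ((m : ℝ) + 2) ^ 2 * lam ^ 3) with hc
  set w := (lam - 1) / (3 * ((m : ℝ) + 2)) with hw
  have hl0 : 0 < lam := by linarith
  obtain ⟨k, hk0, hk₁, hk₂⟩ := exists_nat_mul_le_and_le_pow hlam m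
  set G := {y : ℝ | ∀ ji : Fin k × Fin m, ∀ n : ℤ, c ≤ |y * lam ^ (ji.1 : ℕ) - r ji.2 - n|}
  have hstep (a : ℝ) : ∃ a', Icc a' (a' + w / lam ^ k) ⊆ Icc a (a + w) ∩ G := by
    refine exists_Icc_subset_forall_le_abs_sub (fun ji : Fin k × Fin m => lam ^ (ji.1 : ℕ))
      (fun ji => r ji.2)
      (fun _ => pow_pos hl0 _) (by positivity) (by positivity) (by positivity) ?_ a
    rw [Fintype.sum_prod_type]
    simp only [Finset.sum_const, Finset.card_univ, Fintype.card_fin, nsmul_eq_mul]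
    rw [← Finset.mul_sum, Fin.sum_univ_eq_sum_range
      (fun j => (w * lam ^ j + 2 * c + 1) * (2 * c / lam ^ j + w / lam ^ k))]
    exact covering_sum_lt hlam m k hc hw hk₁ hk₂
  obtain ⟨ξ, hξ, hξG⟩ := exists_mem_Icc_forall_mem_of_exists_Icc_subset
    (fun p => w / (lam ^ k) ^ p) (fun p => by positivity) (fun p => (· * (lam ^ k) ^ p) ⁻¹' G)
    (fun p a => by
      rw [pow_succ', ← div_div]
      exact exists_Icc_subset_preimage_mul_const hstep (by positivity) a) 1
  refine ⟨ξ, by linarith [hξ.1], fun i t n => ?_⟩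
  have ht := hξG (t / k) (⟨t % k, Nat.mod_lt t hk0⟩, i) n
  rwa [mul_assoc, ← pow_mul, ← pow_add, Nat.div_add_mod] at ht
end

section
/- Let λ > 1 and m ≥ 1 be given, and let g be the least positive integer with λ^g ≥ 2(1+gm). If c > 0 satisfies 2λcm + (m+2)√(2λc) < 1, then the set (0,1) ∖ (λ·S_c), where S_c = ⋃_{k∈ℤ} ⋃_{i=1}^m (k + rᵢ − c, k + rᵢ + c) and λ·S_c denotes the dilate {λx : x ∈ S_c}, contains a closed interval of length √(2λc). -/
set_option maxHeartbeats 1000000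


/-- Base case of the nested-interval construction: (0,1) ∖ λ·S_c contains a closed
interval of length √(2λc). -/
theorem stmt2 (lam : ℝ) (hlam : 1 < lam) (m : ℕ) (hm : 1 ≤ m) (r : Fin m → ℝ)
    (g : ℕ) (hg0 : 0 < g) (hg : 2 * (1 + (g : ℝ) * m) ≤ lam ^ g)
    (hgmin : ∀ g' : ℕ, 0 < g' → 2 * (1 + (g' : ℝ) * m) ≤ lam ^ g' → g ≤ g')
    (c : ℝ) (hc : 0 < c)
    (hineq : 2 * lam * c * m + ((m : ℝ) + 2) * Real.sqrt (2 * lam * c) < 1) :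
    ∃ a b : ℝ, b - a = Real.sqrt (2 * lam * c) ∧
      Set.Icc a b ⊆ Set.Ioo (0:ℝ) 1 \
        ((fun x => lam * x) '' {x : ℝ | ∃ (k : ℤ) (i : Fin m),
          x ∈ Set.Ioo ((k : ℝ) + r i - c) ((k : ℝ) + r i + c)}) := by
  have hlam0 : (0:ℝ) < lam := by linarith
  set d := Real.sqrt (2 * lam * c) with hd
  have h2lc : (0:ℝ) < 2 * lam * c := by positivity
  have hd0 : 0 < d := Real.sqrt_pos.mpr h2lc
  have hd2 : d ^ 2 = 2 * lam * c := Real.sq_sqrt h2lc.le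
  have hm1 : (1:ℝ) ≤ m := by exact_mod_cast hm
  have hd1 : d < 1 := by nlinarith [hd0, hm1, h2lc.le, hineq]
  set L := lam * c with hL
  have hL0 : 0 < L := by positivity
  have h2L : 2 * L = d ^ 2 := by rw [hd2, hL]; ring
  set A : ℕ → ℝ := fun j => L + j * (d + 2 * L) with hA
  have hAmono : ∀ j1 j2 : ℕ, j1 + 1 ≤ j2 → A j1 + (d + 2 * L) ≤ A j2 := by
    intro j1 j2 h
    have hc1 : (j1:ℝ) + 1 ≤ j2 := by exact_mod_cast h
    simp only [hA]
    nlinarith [hd0, hL0]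
  have hAle : ∀ j : ℕ, j ≤ m → A j ≤ A m := by
    intro j hj
    have : (j:ℝ) ≤ m := by exact_mod_cast hj
    simp only [hA]
    nlinarith [hd0, hL0]
  have hA0 : ∀ j : ℕ, L ≤ A j := by
    intro j
    have : (0:ℝ) ≤ (j:ℝ) * (d + 2 * L) := by positivity
    simp only [hA]; linarith
  have hAtop : A m + d ≤ 1 - L := by
    have hdd : d ^ 2 ≤ d := by nlinarith [hd0, hd1]
    have hh : 2 * L * m + ((m:ℝ) + 2) * d < 1 := by
      have : 2 * L * (m:ℝ) = 2 * lam * c * m := by rw [hL]; ring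
      linarith [hineq, this.le, this.ge]
    simp only [hA]
    nlinarith [hd0, hL0, hm1]
  -- key claim: some candidate interval avoids all forbidden intervals
  have key : ∃ j : Fin (m+1), ∀ (k : ℤ) (i : Fin m) (x : ℝ),
      x ∈ Set.Icc (A j) (A j + d) →
      ¬ (lam * ((k:ℝ) + r i) - L < x ∧ x < lam * ((k:ℝ) + r i) + L) := by
    by_contra hcon
    push_neg at hcon
    choose K I X hX hlow hhigh using hcon
    have main : ∀ j1 j2 : Fin (m+1), (j1 : ℕ) < (j2 : ℕ) → I j1 = I j2 → False := by
      intro j1 j2 hlt hIeq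
      have hj1 : (j1:ℕ) ≤ m := Nat.lt_succ_iff.mp j1.isLt
      have hj2 : (j2:ℕ) ≤ m := Nat.lt_succ_iff.mp j2.isLt
      obtain ⟨hx1a, hx1b⟩ := hX j1
      obtain ⟨hx2a, hx2b⟩ := hX j2
      have hlow1 := hlow j1
      have hlow2 := hlow j2
      have hhigh1 := hhigh j1
      have hhigh2 := hhigh j2
      have hub1 : A (j1:ℕ) + d ≤ 1 - L := by linarith [hAle _ hj1, hAtop]
      have hub2 : A (j2:ℕ) + d ≤ 1 - L := by linarith [hAle _ hj2, hAtop]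
      have hlb1 := hA0 (j1:ℕ)
      have hlb2 := hA0 (j2:ℕ)
      -- both "centers" lie in (0,1)
      have ht1pos : 0 < lam * ((K j1 : ℝ) + r (I j1)) := by linarith
      have ht1lt : lam * ((K j1 : ℝ) + r (I j1)) < 1 := by linarith
      have ht2pos : 0 < lam * ((K j2 : ℝ) + r (I j2)) := by linarith
      have ht2lt : lam * ((K j2 : ℝ) + r (I j2)) < 1 := by linarith
      -- same integer k
      have hk : K j1 = K j2 := by
        by_contra hkne
        have h1 : (1:ℤ) ≤ |K j1 - K j2| := Int.one_le_abs (sub_ne_zero.mpr hkne)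
        have h1' : (1:ℝ) ≤ |((K j1 : ℝ) - (K j2 : ℝ))| := by
          have : ((1:ℤ):ℝ) ≤ ((|K j1 - K j2| : ℤ) : ℝ) := by exact_mod_cast h1
          simpa [Int.cast_abs] using this
        have hd12 : lam * ((K j1 : ℝ) + r (I j1)) - lam * ((K j2 : ℝ) + r (I j2))
            = lam * ((K j1 : ℝ) - (K j2 : ℝ)) := by rw [hIeq]; ring
        have habs : |lam * ((K j1 : ℝ) - (K j2 : ℝ))|
            = lam * |(K j1 : ℝ) - (K j2 : ℝ)| := by
          rw [abs_mul, abs_of_pos hlam0]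
        have h3 : lam ≤ lam * |(K j1 : ℝ) - (K j2 : ℝ)| := by
          calc lam = lam * 1 := (mul_one lam).symm
            _ ≤ lam * |(K j1 : ℝ) - (K j2 : ℝ)| :=
                mul_le_mul_of_nonneg_left h1' hlam0.le
        have h4 : |lam * ((K j1 : ℝ) - (K j2 : ℝ))| < 1 := by
          rw [← hd12]
          exact abs_lt.mpr ⟨by linarith, by linarith⟩
        rw [habs] at h4
        linarith
      have heq : lam * ((K j1 : ℝ) + r (I j1)) = lam * ((K j2 : ℝ) + r (I j2)) := by
        rw [hIeq, hk]
      have hgap : A (j1:ℕ) + (d + 2 * L) ≤ A (j2:ℕ) := hAmono _ _ hlt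
      linarith
    obtain ⟨j1, j2, hne, hIJ⟩ :=
      Fintype.exists_ne_map_eq_of_card_lt I (by simp)
    have hvne : (j1:ℕ) ≠ (j2:ℕ) := fun h => hne (Fin.ext h)
    rcases lt_or_gt_of_ne hvne with h | h
    · exact main j1 j2 h hIJ
    · exact main j2 j1 h hIJ.symm
  obtain ⟨j, hj⟩ := key
  have hjm : (j:ℕ) ≤ m := Nat.lt_succ_iff.mp j.isLt
  refine ⟨A (j:ℕ), A (j:ℕ) + d, by ring, ?_⟩
  intro x hx
  have hx1 : A (j:ℕ) ≤ x := hx.1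
  have hx2 : x ≤ A (j:ℕ) + d := hx.2
  have hub : A (j:ℕ) + d ≤ 1 - L := le_trans (by linarith [hAle _ hjm]) hAtop
  constructor
  · exact ⟨by linarith [hA0 (j:ℕ)], by linarith⟩
  · rintro ⟨y, ⟨k, i, hy⟩, hxy⟩
    simp only [Set.mem_Ioo] at hy
    have h1 : lam * ((k:ℝ) + r i) - L < lam * y := by
      have := mul_lt_mul_of_pos_left hy.1 hlam0
      rw [hL]; nlinarith
    have h2 : lam * y < lam * ((k:ℝ) + r i) + L := by
      have := mul_lt_mul_of_pos_left hy.2 hlam0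
      rw [hL]; nlinarith
    have hxy' : lam * y = x := hxy
    exact hj k i x hx ⟨by rw [← hxy']; exact h1, by rw [← hxy']; exact h2⟩
end

section
/- Let f be a compactly supported distribution-valued (or function) solution of f(x) = Σ_{j=0}^N c_j f(λx − d_j) with λ > 1, d₀ = 0 < d₁ < ⋯ < d_N, c₀ ≠ 0, and supp f ⊆ [0, d_N/(λ−1)]. If there exists a point u₀ in supp f and an integer m ≥ 0 such that the m-th derivative of f either fails to exist or is discontinuous at u₀, then for every ε > 0 there exists x₀ ∈ [0, ε) at which the m-th derivative of f either fails to exist or is discontinuous. -/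
/-!
The points where `f` fails to be `C^m` form a closed set; it lies in the support, hence in
`[0, ∞)`, so if nonempty it has a least element `b`. Solving the refinement equation for its
`c₀`-term expresses `f` near `x` through `f` near `x / λ` and near `x - d_j`, `j ≥ 1`. For `b > 0`
all these points lie left of `b`, where `f` is `C^m`, so `f` would be `C^m` at `b`. Hence `b = 0`.
-/

open Filter
open scoped ContDiff

theorem isClosed_setOf_not_contDiffAt {𝕜 E F : Type*} [NontriviallyNormedField 𝕜]
    [NormedAddCommGroup E] [NormedSpace 𝕜 E] [NormedAddCommGroup F] [NormedSpace 𝕜 F]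
    {n : WithTop ℕ∞} (hn : n ≠ ∞) (f : E → F) : IsClosed {x | ¬ContDiffAt 𝕜 n f x} :=
  isOpen_compl_iff.1 <| isOpen_iff_mem_nhds.2 fun _ hx =>
    ((not_not.1 hx).eventually hn).mono fun _ => not_not.2

theorem setOf_not_contDiffAt_subset_tsupport {𝕜 E F : Type*} [NontriviallyNormedField 𝕜]
    [NormedAddCommGroup E] [NormedSpace 𝕜 E] [NormedAddCommGroup F] [NormedSpace 𝕜 F]
    {n : WithTop ℕ∞} (f : E → F) : {x | ¬ContDiffAt 𝕜 n f x} ⊆ tsupport f := by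
  intro x hx
  by_contra hxs
  exact hx <| contDiffAt_const.congr_of_eventuallyEq (notMem_tsupport_iff_eventuallyEq.1 hxs)

theorem IsClosed.mem_of_forall_gt_exists_lt {α : Type*} [ConditionallyCompleteLinearOrder α]
    [TopologicalSpace α] [OrderTopology α] {B : Set α} {a : α} (hB : IsClosed B)
    (hne : B.Nonempty) (hle : ∀ x ∈ B, a ≤ x) (hdesc : ∀ x ∈ B, a < x → ∃ y < x, y ∈ B) :
    a ∈ B := by
  have hmem : sInf B ∈ B := hB.csInf_mem hne ⟨a, hle⟩
  rcases (le_csInf hne hle).eq_or_lt with h | h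
  · exact h ▸ hmem
  · obtain ⟨y, hlt, hy⟩ := hdesc _ hmem h
    exact absurd (csInf_le ⟨a, hle⟩ hy) hlt.not_ge

section Refinement

variable {𝕜 F ι : Type*} [NontriviallyNormedField 𝕜] [NormedAddCommGroup F] [NormedSpace 𝕜 F]
  [Fintype ι] [DecidableEq ι] {f : 𝕜 → F} {lam : 𝕜} {c d : ι → 𝕜} {j₀ : ι} {n : WithTop ℕ∞}

theorem eq_inv_smul_sub_sum_of_refinement (hlam : lam ≠ 0) (hd₀ : d j₀ = 0) (hc₀ : c j₀ ≠ 0)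
    (heq : ∀ x, f x = ∑ j, c j • f (lam * x - d j)) (x : 𝕜) :
    f x = (c j₀)⁻¹ • (f (x / lam) - ∑ j ∈ Finset.univ.erase j₀, c j • f (x - d j)) := by
  have h := heq (x / lam)
  rw [← Finset.add_sum_erase _ _ (Finset.mem_univ j₀), hd₀, sub_zero,
    mul_div_cancel₀ _ hlam] at h
  rw [h, add_sub_cancel_right, inv_smul_smul₀ hc₀]

theorem contDiffAt_of_refinement (hlam : lam ≠ 0) (hd₀ : d j₀ = 0) (hc₀ : c j₀ ≠ 0)
    (heq : ∀ x, f x = ∑ j, c j • f (lam * x - d j)) {x : 𝕜}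
    (hdil : ContDiffAt 𝕜 n f (x / lam)) (hshift : ∀ j ≠ j₀, ContDiffAt 𝕜 n f (x - d j)) :
    ContDiffAt 𝕜 n f x := by
  have hsum : ContDiffAt 𝕜 n (fun y => ∑ j ∈ Finset.univ.erase j₀, c j • f (y - d j)) x :=
    ContDiffAt.sum fun j hj => ((hshift j (Finset.ne_of_mem_erase hj)).comp x
      (contDiffAt_id.sub contDiffAt_const)).const_smul (c j)
  have hdil' : ContDiffAt 𝕜 n (fun y => f (y / lam)) x :=
    hdil.comp x (contDiffAt_id.div_const lam)
  exact ((hdil'.sub hsum).const_smul _).congr_of_eventuallyEq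
    (Eventually.of_forall (eq_inv_smul_sub_sum_of_refinement hlam hd₀ hc₀ heq))

end Refinement

theorem exists_lt_not_contDiffAt_of_refinement {F ι : Type*} [NormedAddCommGroup F]
    [NormedSpace ℝ F] [Fintype ι] {f : ℝ → F} {lam : ℝ} {c d : ι → ℝ} {j₀ : ι}
    {n : WithTop ℕ∞} (hlam : 1 < lam) (hd₀ : d j₀ = 0) (hd : ∀ j ≠ j₀, 0 < d j)
    (hc₀ : c j₀ ≠ 0) (heq : ∀ x, f x = ∑ j, c j • f (lam * x - d j)) {x : ℝ} (hx : 0 < x)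
    (hbad : ¬ContDiffAt ℝ n f x) : ∃ y < x, ¬ContDiffAt ℝ n f y := by
  classical
  by_contra! hgood
  refine hbad (contDiffAt_of_refinement (by positivity) hd₀ hc₀ heq (hgood _ ?_) fun j hj =>
    hgood _ (sub_lt_self x (hd j hj)))
  exact div_lt_self hx hlam

theorem stmt7_general (lam : ℝ) (hlam : 1 < lam) (N : ℕ) (c d : Fin (N + 1) → ℝ)
    (hd0 : d 0 = 0) (hd : StrictMono d) (hc0 : c 0 ≠ 0)
    (f : ℝ → ℝ)
    (hsub : tsupport f ⊆ Set.Icc 0 (d (Fin.last N) / (lam - 1)))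
    (heq : ∀ x : ℝ, f x = ∑ j, c j * f (lam * x - d j))
    (m : ℕ) (u₀ : ℝ)
    (hbad : ¬ ContDiffAt ℝ (m : ℕ∞) f u₀) :
    ∀ ε : ℝ, 0 < ε → ∃ x₀ ∈ Set.Ico (0 : ℝ) ε, ¬ ContDiffAt ℝ (m : ℕ∞) f x₀ := by
  intro ε hε
  have hclosed : IsClosed {x | ¬ContDiffAt ℝ (m : ℕ∞) f x} :=
    isClosed_setOf_not_contDiffAt (by exact_mod_cast ENat.natCast_ne_top m) f
  have hnonneg : ∀ x ∈ {x | ¬ContDiffAt ℝ (m : ℕ∞) f x}, 0 ≤ x := fun x hx =>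
    (hsub (setOf_not_contDiffAt_subset_tsupport f hx)).1
  have hshift_pos : ∀ j ≠ 0, 0 < d j := fun j hj => hd0 ▸ hd (Fin.pos_of_ne_zero hj)
  have hzero : (0 : ℝ) ∈ {x | ¬ContDiffAt ℝ (m : ℕ∞) f x} :=
    hclosed.mem_of_forall_gt_exists_lt ⟨u₀, hbad⟩ hnonneg fun _ hx hpos =>
      exists_lt_not_contDiffAt_of_refinement hlam hd0 hshift_pos hc0
        (by simpa only [smul_eq_mul] using heq) hpos hx
  exact ⟨0, ⟨le_rfl, hε⟩, hzero⟩

/-- Bad points of the m-th derivative of a refinable function propagate toward the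
left endpoint of the support. -/
theorem stmt7 (lam : ℝ) (hlam : 1 < lam) (N : ℕ) (c d : Fin (N + 1) → ℝ)
    (hd0 : d 0 = 0) (hd : StrictMono d) (hc0 : c 0 ≠ 0)
    (f : ℝ → ℝ) (hsupp : HasCompactSupport f)
    (hsub : tsupport f ⊆ Set.Icc 0 (d (Fin.last N) / (lam - 1)))
    (heq : ∀ x : ℝ, f x = ∑ j, c j * f (lam * x - d j))
    (m : ℕ) (u₀ : ℝ) (hu₀ : u₀ ∈ tsupport f)
    (hbad : ¬ ContDiffAt ℝ (m : ℕ∞) f u₀) :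
    ∀ ε : ℝ, 0 < ε → ∃ x₀ ∈ Set.Ico (0 : ℝ) ε, ¬ ContDiffAt ℝ (m : ℕ∞) f x₀ :=
  stmt7_general lam hlam N c d hd0 hd hc0 f hsub heq m u₀ hbad
end

section
/- The univariate box spline B(x | (1, √(5/2))), whose Fourier transform is f̂(w) = ((1 − e^{−2πiw})/(2πiw)) · ((1 − e^{−2πi√(5/2)w})/(2πi√(5/2)w)), satisfies the refinement equation f(x) = (1/10) Σ_{j=0}^9 f(√10 · x − d_j), where (d₀,…,d₉) = (0, 1, 2, 3, 4, 5/√10, 1+5/√10, 2+5/√10, 3+5/√10, 4+5/√10). -/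
/-!
Write `boxHat z = (1 - e^{-2πiz}) / (2πiz)` for the Fourier transform of the indicator of `[0, 1]`,
so that `f̂(w) = boxHat w * boxHat (s w)` with `s = √(5/2)`. Summing a geometric series gives
`boxHat (m z) = ((1/m) ∑_{k<m} e^{-2πikz}) boxHat z` for every `m : ℕ`. Since `√10 = 2s` and
`√10 s = 5`, dilation by `√10` turns the two factors into `boxHat (2 (s w))` and `boxHat (5 w)`;
expanding both and multiplying the two geometric sums gives the digits `j + k s`
(`j < 5`, `k < 2`), which are the `d_j` because `5 / √10 = s`.
-/

open Complex Finset

noncomputable def boxHat (z : ℂ) : ℂ :=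
  (1 - cexp (-2 * Real.pi * I * z)) / (2 * Real.pi * I * z)

theorem boxHat_natCast_mul (m : ℕ) (z : ℂ) :
    boxHat (m * z) = (1 / m * ∑ k ∈ range m, cexp (-2 * Real.pi * I * k * z)) * boxHat z := by
  rcases eq_or_ne z 0 with rfl | hz
  · simp [boxHat]
  rcases eq_or_ne m 0 with rfl | hm
  · simp [boxHat]
  have hpow (k : ℕ) : cexp (-2 * Real.pi * I * k * z) = cexp (-2 * Real.pi * I * z) ^ k := by
    rw [← exp_nat_mul]
    ring_nf
  have hπ : (Real.pi : ℂ) ≠ 0 := by exact_mod_cast Real.pi_ne_zero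
  simp only [boxHat, ← mul_assoc]
  simp only [hpow, ← geom_sum_mul_neg]
  field_simp

theorem boxHat_mul_boxHat_of_eq_natCast_mul (m n : ℕ) {x y u v : ℂ} (hx : x = m * v)
    (hy : y = n * u) :
    boxHat x * boxHat y = (1 / (m * n) * ∑ k ∈ range m, ∑ j ∈ range n,
      cexp (-2 * Real.pi * I * (j * u + k * v))) * (boxHat u * boxHat v) := by
  have hsum : ∑ k ∈ range m, ∑ j ∈ range n, cexp (-2 * Real.pi * I * (j * u + k * v)) =
      (∑ k ∈ range m, cexp (-2 * Real.pi * I * k * v)) *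
        ∑ j ∈ range n, cexp (-2 * Real.pi * I * j * u) := by
    rw [sum_mul_sum]
    refine sum_congr rfl fun k _ ↦ sum_congr rfl fun j _ ↦ ?_
    rw [← exp_add]
    ring_nf
  rw [hx, hy, boxHat_natCast_mul, boxHat_natCast_mul, hsum]
  ring

theorem sum_exp_digits (b w : ℝ) :
    ∑ j : Fin 10, cexp (-2 * Real.pi * I *
      (![0, 1, 2, 3, 4, b, 1 + b, 2 + b, 3 + b, 4 + b] : Fin 10 → ℝ) j * w) =
    ∑ k ∈ range 2, ∑ j ∈ range 5, cexp (-2 * Real.pi * I * (j * w + k * (b * w))) := by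
  simp only [Fin.sum_univ_succ, Fin.sum_univ_zero, Matrix.cons_val_zero, Matrix.cons_val_succ,
    sum_range_succ, sum_range_zero]
  push_cast
  ring_nf

/-- The box spline B(x | (1, √(5/2))) is √10-refinable (Fourier side). -/
theorem stmt11 (F : ℝ → ℂ)
    (hF : ∀ w : ℝ, F w =
      ((1 - Complex.exp (-2 * Real.pi * Complex.I * w)) / (2 * Real.pi * Complex.I * w)) *
      ((1 - Complex.exp (-2 * Real.pi * Complex.I * Real.sqrt (5 / 2) * w)) /
        (2 * Real.pi * Complex.I * Real.sqrt (5 / 2) * w)))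
    (d : Fin 10 → ℝ)
    (hd : d = ![0, 1, 2, 3, 4, 5 / Real.sqrt 10, 1 + 5 / Real.sqrt 10,
      2 + 5 / Real.sqrt 10, 3 + 5 / Real.sqrt 10, 4 + 5 / Real.sqrt 10]) :
    ∀ w : ℝ, F (Real.sqrt 10 * w) =
      ((1 : ℂ) / 10 * ∑ j, Complex.exp (-2 * Real.pi * Complex.I * d j * w)) * F w := by
  set s := Real.sqrt (5 / 2)
  have hF' (w : ℝ) : F w = boxHat w * boxHat (s * w) := by
    rw [hF]
    simp only [boxHat, mul_assoc]
  have hsqrt10 : Real.sqrt 10 = 2 * s := by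
    rw [show (10 : ℝ) = 2 ^ 2 * (5 / 2) by norm_num, Real.sqrt_mul (by positivity),
      Real.sqrt_sq zero_le_two]
  have hs_mul : s * Real.sqrt 10 = 5 := by
    rw [← Real.sqrt_mul (by norm_num), show (5 / 2 : ℝ) * 10 = 5 ^ 2 by norm_num,
      Real.sqrt_sq (by norm_num)]
  have hdigit : 5 / Real.sqrt 10 = s := by
    rw [div_eq_iff (by positivity), hs_mul]
  intro w
  rw [hF', hF', boxHat_mul_boxHat_of_eq_natCast_mul 2 5 (u := w) (v := s * w), hd, hdigit,
    sum_exp_digits]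
  · norm_num
  · push_cast [hsqrt10]
    ring
  · push_cast
    rw [← mul_assoc, ← ofReal_mul, hs_mul]
    norm_num
end

section
/- The quasi-trigonometric polynomial identity (1/10) Σ_{j=0}^9 e^{−2πi d_j w} = (1/10)(Σ_{j=0}^4 e^{−2πijw})(1 + e^{−2πi(5/√10)w}) holds for all real w, where (d₀,…,d₉) = (0, 1, 2, 3, 4, 5/√10, 1+5/√10, 2+5/√10, 3+5/√10, 4+5/√10), and the set {d₀,…,d₉} is not contained in any set of the form aℤ + b with a ≠ 0. -/
open Complex

theorem div_sub_mem_range_ratCast_of_mem_lattice {a b x y z : ℝ} {l m n : ℤ}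
    (hx : x = a * l + b) (hy : y = a * m + b) (hz : z = a * n + b) (hxy : x ≠ y) :
    (z - x) / (y - x) ∈ Set.range ((↑) : ℚ → ℝ) := by
  have ha : a ≠ 0 := by rintro rfl; simp_all
  refine ⟨(n - l : ℤ) / (m - l : ℤ), ?_⟩
  rw [show z - x = a * (n - l) by rw [hz, hx]; ring, show y - x = a * (m - l) by rw [hy, hx]; ring,
    mul_div_mul_left _ _ ha]
  push_cast
  rfl

theorem sum_exp_eq_mul_of_translate {m : ℕ} (d : Fin (m + m) → ℝ) (e : Fin m → ℝ) (τ w : ℝ)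
    (hd₁ : ∀ i, d (Fin.castAdd m i) = e i) (hd₂ : ∀ i, d (Fin.natAdd m i) = e i + τ) :
    ∑ j, exp (-2 * Real.pi * I * d j * w) =
      (∑ i, exp (-2 * Real.pi * I * e i * w)) * (1 + exp (-2 * Real.pi * I * τ * w)) := by
  simp only [Fin.sum_univ_add, hd₁, hd₂, ofReal_add, mul_add, add_mul, exp_add, Finset.sum_mul,
    mul_one]

theorem irrational_five_div_sqrt_ten : Irrational (5 / Real.sqrt 10) :=
  (by decide +kernel : Irrational (Real.sqrt 10)).natCast_div (m := 5) (by norm_num)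

/-- Factorization of the mask and non-lattice property of the translation set. -/
theorem stmt12 (d : Fin 10 → ℝ)
    (hd : d = ![0, 1, 2, 3, 4, 5 / Real.sqrt 10, 1 + 5 / Real.sqrt 10,
      2 + 5 / Real.sqrt 10, 3 + 5 / Real.sqrt 10, 4 + 5 / Real.sqrt 10]) :
    (∀ w : ℝ, (1 : ℂ) / 10 * ∑ j, Complex.exp (-2 * Real.pi * Complex.I * d j * w) =
      (1 : ℂ) / 10 * (∑ j ∈ Finset.range 5,
        Complex.exp (-2 * Real.pi * Complex.I * j * w)) *
        (1 + Complex.exp (-2 * Real.pi * Complex.I * (5 / Real.sqrt 10) * w))) ∧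
    ¬ ∃ (a b : ℝ), a ≠ 0 ∧ ∀ j : Fin 10, ∃ n : ℤ, d j = a * n + b := by
  subst hd
  refine ⟨fun w => ?_, ?_⟩
  · rw [mul_assoc (1 / 10 : ℂ), sum_exp_eq_mul_of_translate (m := 5) _ (fun i => (i : ℕ))
      (5 / Real.sqrt 10) w (fun i => ?_) (fun i => ?_)]
    · push_cast
      rw [Fin.sum_univ_eq_sum_range (fun j : ℕ => exp (-2 * Real.pi * I * j * w))]
    all_goals fin_cases i <;> simp
  · rintro ⟨a, b, -, hlat⟩
    obtain ⟨l, h0⟩ := hlat 0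
    obtain ⟨m, h1⟩ := hlat 1
    obtain ⟨n, h5⟩ := hlat 5
    exact irrational_five_div_sqrt_ten
      (by simpa using div_sub_mem_range_ratCast_of_mem_lattice h0 h1 h5 (by simp))
end

section
/- Let A = (m₁, …, m_n) be a vector of nonzero real numbers, λ > 1 a real number, and for each j let Z_j = {I/m_j : I ∈ ℤ ∖ {0}} and Z_j′ = {k/(λ m_j) : k ∈ ℤ ∖ {0}}. If ⋃_{j=1}^n Z_j ⊆ ⋃_{j=1}^n Z_j′, then for each index i ∈ {1,…,n} there exist an index u ∈ {1,…,n} and a nonzero integer p such that m_u = p·m_i/λ. -/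
/-- Zero-set containment forces, for each i, some m_u = p·m_i/λ with p a nonzero
integer. -/
theorem stmt13 (n : ℕ) (m : Fin n → ℝ) (hm : ∀ j, m j ≠ 0) (lam : ℝ) (hlam : 1 < lam)
    (h : (⋃ j, {x : ℝ | ∃ I : ℤ, I ≠ 0 ∧ x = I / m j}) ⊆
         (⋃ j, {x : ℝ | ∃ k : ℤ, k ≠ 0 ∧ x = k / (lam * m j)})) :
    ∀ i : Fin n, ∃ (u : Fin n) (p : ℤ), p ≠ 0 ∧ m u = p * m i / lam := by
  intro i
  have hx : (1 : ℝ) / m i ∈ ⋃ j, {x : ℝ | ∃ I : ℤ, I ≠ 0 ∧ x = I / m j} := by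
    exact Set.mem_iUnion.2 ⟨i, ⟨1, one_ne_zero, by norm_num⟩⟩
  have hmem := h hx
  rw [Set.mem_iUnion] at hmem
  obtain ⟨u, k, hk, hxeq⟩ := hmem
  refine ⟨u, k, hk, ?_⟩
  have hlam0 : lam ≠ 0 := by linarith
  have hmi := hm i
  have hmu := hm u
  field_simp at hxeq ⊢
  linarith [hxeq]
end
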